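/- Suppose Π ⊢_μ t̲ : V is derivable in λ_view, where Π = x̲₁:V₁,…,x̲ₙ:Vₙ. If a state ST decomposes as ST = ST₀⊗ST₁⊗…⊗STₙ where ⊨ ST₀ : μ holds and STᵢ ⊨ Vᵢ holds for each 1 ≤ i ≤ n, then ST ⊨ V holds. -/

import Mathlib

namespace LView

/-! # The language λ_view

A deep embedding of the language λ_view of Xi et al.: views, types, viewtypes,
proof terms, dynamic terms, states, and the typing and evaluation judgments. -/

/-- Constant addresses `l₀, l₁, …`, modeled as natural numbers. -/
abbrev Addr := ℕ

mutual
/-- Views `V ::= T@L ∣ 𝟏 ∣ V₁ ⊗ V₂ ∣ V₁ ⊸ V₂` (the `T` in `T@L` is a type,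
i.e. a viewtype satisfying `IsType`). -/
inductive View : Type
  | at_ : Viewtype → Addr → View          -- T@L
  | one : View                            -- 𝟏
  | tensor : View → View → View           -- V₁ ⊗ V₂
  | limp : View → View → View             -- V₁ ⊸ V₂

/-- Viewtypes
`VT ::= Bool ∣ Int ∣ ptr(L) ∣ 1 ∣ V∧VT ∣ V⊸₀VT ∣ V⊃VT ∣ VT*VT ∣ VT→₀VT ∣ VT→VT`. -/
inductive Viewtype : Type
  | bool : Viewtype                       -- Bool
  | int : Viewtype                        -- Int
  | ptr : Addr → Viewtype                 -- ptr(L)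
  | unit : Viewtype                       -- 1
  | vand : View → Viewtype → Viewtype     -- V ∧ VT
  | vimp0 : View → Viewtype → Viewtype    -- V ⊸₀ VT
  | vimp : View → Viewtype → Viewtype     -- V ⊃ VT
  | prod : Viewtype → Viewtype → Viewtype -- VT₁ * VT₂
  | arrow0 : Viewtype → Viewtype → Viewtype -- VT₁ →₀ VT₂
  | arrow : Viewtype → Viewtype → Viewtype  -- VT₁ → VT₂
end

/-- Types `T ::= Bool ∣ Int ∣ ptr(L) ∣ 1 ∣ V⊃VT ∣ T*T ∣ VT→VT`: the viewtypes built
without the view-dependent constructors `V∧VT`, `V⊸₀VT`, `VT→₀VT`. -/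
inductive IsType : Viewtype → Prop
  | bool : IsType .bool
  | int : IsType .int
  | ptr (l : Addr) : IsType (.ptr l)
  | unit : IsType .unit
  | vimp (V : View) (VT : Viewtype) : IsType (.vimp V VT)
  | prod {T1 T2 : Viewtype} : IsType T1 → IsType T2 → IsType (.prod T1 T2)
  | arrow (VT1 VT2 : Viewtype) : IsType (.arrow VT1 VT2)

/-- A state type `μ`: a map from constant addresses to types. -/
abbrev StateType := Addr → Option Viewtype

/-- The empty state type `[]`. -/
def StateType.empty : StateType := fun _ => none

/-- The singleton state type `[l ↦ T]`. -/
def StateType.single (l : Addr) (T : Viewtype) : StateType :=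
  fun l' => if l' = l then some T else none

/-- Disjointness of the domains of two state types. -/
def SDisj (μ1 μ2 : StateType) : Prop := ∀ l, μ1 l = none ∨ μ2 l = none

/-- The union `μ₁ ⊗ μ₂` of two state types (intended for disjoint domains). -/
def SUnion (μ1 μ2 : StateType) : StateType := fun l => (μ1 l).orElse (fun _ => μ2 l)

/-- Proof terms `t̲ ::= x̲ ∣ l̲ ∣ ⟨⟩ ∣ ⟨t̲₁,t̲₂⟩ ∣ let ⟨x̲₁,x̲₂⟩ = t̲₁ in t̲₂ ∣ λx̲.t̲ ∣ t̲₁(t̲₂)`.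
Proof variables are named by natural numbers. -/
inductive PTerm : Type
  | var : ℕ → PTerm
  | addr : Addr → PTerm
  | unit : PTerm
  | pair : PTerm → PTerm → PTerm
  | lett : ℕ → ℕ → PTerm → PTerm → PTerm
  | lam : ℕ → PTerm → PTerm
  | app : PTerm → PTerm → PTerm

/-- A proof variable context `Π`, assigning views to proof variables. -/
abbrev PCtx := Multiset (ℕ × View)

/-- The rules of Figure 3, assigning views to proof terms: `Π ⊢_μ t̲ : V`. -/
inductive PJ : PCtx → StateType → PTerm → View → Prop
  | addr {T : Viewtype} {l : Addr} :
      IsType T → PJ 0 (StateType.single l T) (.addr l) (.at_ T l)   -- (vw-addr)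
  | var {x : ℕ} {V : View} : PJ {(x, V)} StateType.empty (.var x) V -- (vw-var)
  | unit : PJ 0 StateType.empty .unit .one                          -- (vw-unit)
  | pair {P1 P2 μ1 μ2 t1 t2 V1 V2} :                                -- (vw-tup)
      PJ P1 μ1 t1 V1 → PJ P2 μ2 t2 V2 → SDisj μ1 μ2 →
      PJ (P1 + P2) (SUnion μ1 μ2) (.pair t1 t2) (.tensor V1 V2)
  | lett {P1 P2 μ1 μ2 t1 t2 x1 x2 V1 V2 V} :                        -- (vw-let)
      PJ P1 μ1 t1 (.tensor V1 V2) →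
      PJ (P2 + {(x1, V1), (x2, V2)}) μ2 t2 V → SDisj μ1 μ2 →
      PJ (P1 + P2) (SUnion μ1 μ2) (.lett x1 x2 t1 t2) V
  | lam {P μ x t V1 V2} :                                           -- (vw-lam)
      PJ (P + {(x, V1)}) μ t V2 → PJ P μ (.lam x t) (.limp V1 V2)
  | app {P1 P2 μ1 μ2 t1 t2 V1 V2} :                                 -- (vw-app)
      PJ P1 μ1 t1 (.limp V1 V2) → PJ P2 μ2 t2 V1 → SDisj μ1 μ2 →
      PJ (P1 + P2) (SUnion μ1 μ2) (.app t1 t2) V2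


/-- Dynamic terms (Figure 2). Both lam-variables `x` and fix-variables `f` are drawn from
the same set of names (naturals). Boolean constants, integer constants and the pointer
constant for each address `l` (of c-type `() ⇒ ptr(l)`) are built in; all other constants
are constructors `cc` or functions `cf` named by naturals and typed by a signature. -/
inductive DTerm : Type
  | var : ℕ → DTerm                         -- x or f
  | bool : Bool → DTerm                     -- boolean constants, c-type () ⇒ Bool
  | int : ℤ → DTerm                         -- integer constants, c-type () ⇒ Int
  | ptrv : Addr → DTerm                     -- the constant l, c-type () ⇒ ptr(l)
  | cc : ℕ → List DTerm → DTerm             -- constructor application cc(t₁,…,tₙ)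
  | cf : ℕ → List DTerm → DTerm             -- function application cf(t₁,…,tₙ)
  | ite : DTerm → DTerm → DTerm → DTerm     -- if(t₁,t₂,t₃)
  | read : PTerm → DTerm → DTerm            -- read(t̲,t)
  | write : PTerm → DTerm → DTerm → DTerm   -- write(t̲,t₁,t₂)
  | vpair : PTerm → DTerm → DTerm           -- t̲ ∧ t
  | vlet : ℕ → ℕ → DTerm → DTerm → DTerm    -- let x̲∧x = t₁ in t₂
  | plam : ℕ → DTerm → DTerm                -- λx̲.v
  | papp : DTerm → PTerm → DTerm            -- t(t̲)
  | unit : DTerm                            -- ⟨⟩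
  | pair : DTerm → DTerm → DTerm            -- ⟨t₁,t₂⟩
  | lett : ℕ → ℕ → DTerm → DTerm → DTerm    -- let ⟨x₁,x₂⟩ = t₁ in t₂
  | lam : ℕ → DTerm → DTerm                 -- lam x. t
  | app : DTerm → DTerm → DTerm             -- app(t₁,t₂)
  | fix : ℕ → DTerm → DTerm                 -- fix f. t

/-- Values `v ::= x ∣ cc(v₁,…,vₙ) ∣ t̲∧v ∣ λx̲.v ∣ ⟨⟩ ∣ ⟨v₁,v₂⟩ ∣ lam x.t`
(together with the built-in constants). -/
inductive IsVal : DTerm → Prop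
  | var (x : ℕ) : IsVal (.var x)
  | bool (b : Bool) : IsVal (.bool b)
  | int (i : ℤ) : IsVal (.int i)
  | ptrv (l : Addr) : IsVal (.ptrv l)
  | cc {c ts} : (∀ t ∈ ts, IsVal t) → IsVal (.cc c ts)
  | vpair {p v} : IsVal v → IsVal (.vpair p v)
  | plam {x v} : IsVal v → IsVal (.plam x v)
  | unit : IsVal .unit
  | pair {v1 v2} : IsVal v1 → IsVal v2 → IsVal (.pair v1 v2)
  | lam (x : ℕ) (t : DTerm) : IsVal (.lam x t)

/-- A signature, assigning c-types `(T₁,…,Tₙ) ⇒ T` to the constructors `cc` and the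
functions `cf`, and giving the (partial) meaning of each function `cf` on value lists. -/
structure Sig where
  ccTy : ℕ → Option (List Viewtype × Viewtype)
  cfTy : ℕ → Option (List Viewtype × Viewtype)
  cfDef : ℕ → List DTerm → Option DTerm

/-- A dynamic variable context component (`Δⁱ` or `Δˡ`), assigning viewtypes to
dynamic variables. -/
abbrev DCtx := Multiset (ℕ × Viewtype)

/-- Extending a dynamic variable context `Δ = (Δⁱ;Δˡ)` by `x:VT`:
`Δ,x:VT` stands for `(Δⁱ;Δˡ,x:VT)`, or for `(Δⁱ,x:VT;Δˡ)` in case `VT` is a type. -/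
inductive Ext : DCtx → DCtx → ℕ → Viewtype → DCtx → DCtx → Prop
  | intu {Δi Δl x VT} : IsType VT → Ext Δi Δl x VT (Δi + {(x, VT)}) Δl
  | lin {Δi Δl x VT} : Ext Δi Δl x VT Δi (Δl + {(x, VT)})

mutual
/-- The rules of Figure 5, assigning viewtypes to dynamic terms:
`Π; (Δⁱ;Δˡ) ⊢_μ t : VT` (relative to a signature for the constants). -/
inductive DJ (sig : Sig) : PCtx → DCtx → DCtx → StateType → DTerm → Viewtype → Prop
  | varI {Δi x T} :                                                     -- (ty-var), x ∈ Δⁱ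
      IsType T → DJ sig 0 (Δi + {(x, T)}) 0 StateType.empty (.var x) T
  | varL {Δi x VT} :                                                    -- (ty-var), x ∈ Δˡ
      DJ sig 0 Δi {(x, VT)} StateType.empty (.var x) VT
  | bool {Δi} (b : Bool) : DJ sig 0 Δi 0 StateType.empty (.bool b) .bool
  | int {Δi} (i : ℤ) : DJ sig 0 Δi 0 StateType.empty (.int i) .int
  | ptrv {Δi} (l : Addr) : DJ sig 0 Δi 0 StateType.empty (.ptrv l) (.ptr l)
  | cc {P Δi Δl μ c ts Ts T} :                                          -- (ty-cst), c = cc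
      sig.ccTy c = some (Ts, T) → (∀ T' ∈ Ts, IsType T') → IsType T →
      DJs sig P Δi Δl μ ts Ts → DJ sig P Δi Δl μ (.cc c ts) T
  | cf {P Δi Δl μ c ts Ts T} :                                          -- (ty-cst), c = cf
      sig.cfTy c = some (Ts, T) → (∀ T' ∈ Ts, IsType T') → IsType T →
      DJs sig P Δi Δl μ ts Ts → DJ sig P Δi Δl μ (.cf c ts) T
  | ite {P1 P2 Δi Δl1 Δl2 μ1 μ2 t1 t2 t3 VT} :                          -- (ty-if)
      DJ sig P1 Δi Δl1 μ1 t1 .bool →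
      DJ sig P2 Δi Δl2 μ2 t2 VT → DJ sig P2 Δi Δl2 μ2 t3 VT → SDisj μ1 μ2 →
      DJ sig (P1 + P2) Δi (Δl1 + Δl2) (SUnion μ1 μ2) (.ite t1 t2 t3) VT
  | vpair {P1 P2 Δi Δl μ1 μ2 p t V VT} :                                -- (ty-vtup)
      PJ P1 μ1 p V → DJ sig P2 Δi Δl μ2 t VT → SDisj μ1 μ2 →
      DJ sig (P1 + P2) Δi Δl (SUnion μ1 μ2) (.vpair p t) (.vand V VT)
  | unit {Δi} : DJ sig 0 Δi 0 StateType.empty .unit .unit               -- (ty-unit)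
  | pair {P1 P2 Δi Δl1 Δl2 μ1 μ2 t1 t2 VT1 VT2} :                       -- (ty-tup)
      DJ sig P1 Δi Δl1 μ1 t1 VT1 → DJ sig P2 Δi Δl2 μ2 t2 VT2 → SDisj μ1 μ2 →
      DJ sig (P1 + P2) Δi (Δl1 + Δl2) (SUnion μ1 μ2) (.pair t1 t2) (.prod VT1 VT2)
  | lett {P1 P2 Δi Δl1 Δl2 Δi' Δl' Δi'' Δl'' μ1 μ2 x1 x2 t1 t2 VT1 VT2 VT} : -- (ty-let)
      DJ sig P1 Δi Δl1 μ1 t1 (.prod VT1 VT2) →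
      Ext Δi Δl2 x1 VT1 Δi' Δl' → Ext Δi' Δl' x2 VT2 Δi'' Δl'' →
      DJ sig P2 Δi'' Δl'' μ2 t2 VT → SDisj μ1 μ2 →
      DJ sig (P1 + P2) Δi (Δl1 + Δl2) (SUnion μ1 μ2) (.lett x1 x2 t1 t2) VT
  | vlam0 {P Δi Δl μ px v V VT} :                                       -- (ty-vlam0)
      IsVal v → DJ sig (P + {(px, V)}) Δi Δl μ v VT →
      DJ sig P Δi Δl μ (.plam px v) (.vimp0 V VT)
  | vlam {Δi px v V VT} :                                               -- (ty-vlam)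
      IsVal v → DJ sig {(px, V)} Δi 0 StateType.empty v VT →
      DJ sig 0 Δi 0 StateType.empty (.plam px v) (.vimp V VT)
  | vapp0 {P1 P2 Δi Δl μ1 μ2 t p V VT} :                                -- (ty-vapp), ⊸₀
      DJ sig P1 Δi Δl μ1 t (.vimp0 V VT) → PJ P2 μ2 p V → SDisj μ1 μ2 →
      DJ sig (P1 + P2) Δi Δl (SUnion μ1 μ2) (.papp t p) VT
  | vapp {P1 P2 Δi Δl μ1 μ2 t p V VT} :                                 -- (ty-vapp), ⊃
      DJ sig P1 Δi Δl μ1 t (.vimp V VT) → PJ P2 μ2 p V → SDisj μ1 μ2 →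
      DJ sig (P1 + P2) Δi Δl (SUnion μ1 μ2) (.papp t p) VT
  | lam0 {P Δi Δl Δi' Δl' μ x t VT1 VT2} :                              -- (ty-lam0)
      Ext Δi Δl x VT1 Δi' Δl' → DJ sig P Δi' Δl' μ t VT2 →
      DJ sig P Δi Δl μ (.lam x t) (.arrow0 VT1 VT2)
  | lam {Δi Δi' Δl' x t VT1 VT2} :                                      -- (ty-lam)
      Ext Δi 0 x VT1 Δi' Δl' → DJ sig 0 Δi' Δl' StateType.empty t VT2 →
      DJ sig 0 Δi 0 StateType.empty (.lam x t) (.arrow VT1 VT2)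
  | app0 {P1 P2 Δi Δl1 Δl2 μ1 μ2 t1 t2 VT1 VT2} :                       -- (ty-app), →₀
      DJ sig P1 Δi Δl1 μ1 t1 (.arrow0 VT1 VT2) → DJ sig P2 Δi Δl2 μ2 t2 VT1 → SDisj μ1 μ2 →
      DJ sig (P1 + P2) Δi (Δl1 + Δl2) (SUnion μ1 μ2) (.app t1 t2) VT2
  | app {P1 P2 Δi Δl1 Δl2 μ1 μ2 t1 t2 VT1 VT2} :                        -- (ty-app), →
      DJ sig P1 Δi Δl1 μ1 t1 (.arrow VT1 VT2) → DJ sig P2 Δi Δl2 μ2 t2 VT1 → SDisj μ1 μ2 →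
      DJ sig (P1 + P2) Δi (Δl1 + Δl2) (SUnion μ1 μ2) (.app t1 t2) VT2
  | vlet {P1 P2 Δi Δl1 Δl2 Δi' Δl' μ1 μ2 px x t1 t2 V VT1 VT2} :        -- (ty-vlet)
      DJ sig P1 Δi Δl1 μ1 t1 (.vand V VT1) →
      Ext Δi Δl2 x VT1 Δi' Δl' →
      DJ sig (P2 + {(px, V)}) Δi' Δl' μ2 t2 VT2 → SDisj μ1 μ2 →
      DJ sig (P1 + P2) Δi (Δl1 + Δl2) (SUnion μ1 μ2) (.vlet px x t1 t2) VT2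
  | fix {Δi f t T} :                                                    -- (ty-fix)
      IsType T → DJ sig 0 (Δi + {(f, T)}) 0 StateType.empty t T →
      DJ sig 0 Δi 0 StateType.empty (.fix f t) T
  | read {P1 P2 Δi Δl μ1 μ2 p t T l} :                                  -- (ty-read)
      PJ P1 μ1 p (.at_ T l) → DJ sig P2 Δi Δl μ2 t (.ptr l) → SDisj μ1 μ2 →
      DJ sig (P1 + P2) Δi Δl (SUnion μ1 μ2) (.read p t) (.vand (.at_ T l) T)
  | write {P1 P2 P3 Δi Δl2 Δl3 μ1 μ2 μ3 p t1 t2 T T' l} :               -- (ty-write)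
      PJ P1 μ1 p (.at_ T l) → DJ sig P2 Δi Δl2 μ2 t1 (.ptr l) →
      DJ sig P3 Δi Δl3 μ3 t2 T' → IsType T' →
      SDisj μ1 μ2 → SDisj μ2 μ3 → SDisj μ1 μ3 →
      DJ sig (P1 + P2 + P3) Δi (Δl2 + Δl3) (SUnion μ1 (SUnion μ2 μ3)) (.write p t1 t2)
        (.vand (.at_ T' l) .unit)

/-- Typing of argument lists of constants, splitting `Π`, `Δˡ` and `μ` across the
arguments (all sharing the same `Δⁱ`). -/
inductive DJs (sig : Sig) : PCtx → DCtx → DCtx → StateType → List DTerm → List Viewtype → Prop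
  | nil {Δi} : DJs sig 0 Δi 0 StateType.empty [] []
  | cons {P1 P2 Δi Δl1 Δl2 μ1 μ2 t ts T Ts} :
      DJ sig P1 Δi Δl1 μ1 t T → DJs sig P2 Δi Δl2 μ2 ts Ts → SDisj μ1 μ2 →
      DJs sig (P1 + P2) Δi (Δl1 + Δl2) (SUnion μ1 μ2) (t :: ts) (T :: Ts)
end


/-- A state `ST`: a map from constant addresses to (closed) values. -/
abbrev State := Addr → Option DTerm

/-- The empty state `[]`. -/
def State.empty : State := fun _ => none

/-- The singleton state `[l ↦ v]`. -/
def State.single (l : Addr) (v : DTerm) : State := fun l' => if l' = l then some v else none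

/-- Disjointness of the domains of two states. -/
def TDisj (s1 s2 : State) : Prop := ∀ l, s1 l = none ∨ s2 l = none

/-- The union `ST₁ ⊗ ST₂` of two states (intended for disjoint domains). -/
def TUnion (s1 s2 : State) : State := fun l => (s1 l).orElse (fun _ => s2 l)

/-- The update `ST[l := v]` (intended for `l ∈ dom(ST)`). -/
def State.update (ST : State) (l : Addr) (v : DTerm) : State :=
  fun l' => if l' = l then some v else ST l'

/-- `⊨ ST : μ`: the states `ST` and `μ` have the same domain and `ST(l)` is a closed value
that can be assigned the type `μ(l)` for each `l ∈ dom(ST) = dom(μ)`. -/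
def StOk (sig : Sig) (ST : State) (μ : StateType) : Prop :=
  (∀ l, (ST l).isSome ↔ (μ l).isSome) ∧
  (∀ l v T, ST l = some v → μ l = some T →
    IsType T ∧ IsVal v ∧ DJ sig 0 0 0 StateType.empty v T)

/-- State entailment `ST ⊨ V`: `[l↦v] ⊨ T@l` if `∅;(∅;∅) ⊢_[] v : T` (for a value `v`);
`ST₁⊗ST₂ ⊨ V₁⊗V₂` if `ST₁ ⊨ V₁` and `ST₂ ⊨ V₂`; `[] ⊨ 𝟏`; and `ST ⊨ V₁⊸V₂` if
`ST₀⊗ST ⊨ V₂` for each `ST₀` with `ST₀ ⊨ V₁`. -/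
def Sat (sig : Sig) : View → State → Prop
  | .at_ T l, ST => ∃ v, ST = State.single l v ∧ IsVal v ∧ DJ sig 0 0 0 StateType.empty v T
  | .one, ST => ST = State.empty
  | .tensor V1 V2, ST => ∃ ST1 ST2, TDisj ST1 ST2 ∧ ST = TUnion ST1 ST2 ∧
      Sat sig V1 ST1 ∧ Sat sig V2 ST2
  | .limp V1 V2, ST => ∀ ST0, Sat sig V1 ST0 → TDisj ST0 ST → Sat sig V2 (TUnion ST0 ST)


/-! ## Capture-avoiding substitution

Substitution is implemented in the standard capture-avoiding way: all binders in the
term being substituted into are uniformly α-renamed to fresh names (taken above every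
name occurring in the terms involved) while the substitution is carried out, so that no
free variable of the substituted term can be captured. -/

/-- A name fresh for (strictly above) the finite set `s`. -/
def fresh (s : Finset ℕ) : ℕ := s.sup id + 1

/-- All (free or bound) variables of a proof term. -/
def PTerm.allv : PTerm → Finset ℕ
  | .var x => {x}
  | .addr _ => ∅
  | .unit => ∅
  | .pair a b => a.allv ∪ b.allv
  | .lett x1 x2 a b => insert x1 (insert x2 (a.allv ∪ b.allv))
  | .lam x b => insert x b.allv
  | .app a b => a.allv ∪ b.allv

/-- Auxiliary capture-avoiding substitution of `s` for the free proof variable `x` in a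
proof term: `ρ` renames the variables bound by the binders already passed (to names taken
from the fresh counter `c`). -/
def PTerm.substAux (s : PTerm) (x : ℕ) : (ℕ → Option ℕ) → ℕ → PTerm → PTerm
  | ρ, _, .var y =>
      match ρ y with
      | some z => .var z
      | none => if y = x then s else .var y
  | _, _, .addr l => .addr l
  | _, _, .unit => .unit
  | ρ, c, .pair a b => .pair (substAux s x ρ c a) (substAux s x ρ c b)
  | ρ, c, .lett y1 y2 a b =>
      .lett c (c + 1) (substAux s x ρ c a)
        (substAux s x (fun w => if w = y2 then some (c + 1) else
          if w = y1 then some c else ρ w) (c + 2) b)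
  | ρ, c, .lam y b =>
      .lam c (substAux s x (fun w => if w = y then some c else ρ w) (c + 1) b)
  | ρ, c, .app a b => .app (substAux s x ρ c a) (substAux s x ρ c b)

/-- The capture-avoiding substitution `[t̲₁/x̲]t̲₂` of a proof term for a proof variable in
a proof term. -/
def psubst (s : PTerm) (x : ℕ) (t : PTerm) : PTerm :=
  PTerm.substAux s x (fun _ => none) (fresh (s.allv ∪ t.allv ∪ {x})) t

/-- Renaming the free proof variables of a proof term according to `ρ` (variables bound
within the term are shadowed and left untouched). -/
def PTerm.renameAux : (ℕ → Option ℕ) → PTerm → PTerm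
  | ρ, .var y => .var ((ρ y).getD y)
  | _, .addr l => .addr l
  | _, .unit => .unit
  | ρ, .pair a b => .pair (renameAux ρ a) (renameAux ρ b)
  | ρ, .lett y1 y2 a b =>
      .lett y1 y2 (renameAux ρ a)
        (renameAux (fun w => if w = y1 ∨ w = y2 then none else ρ w) b)
  | ρ, .lam y b => .lam y (renameAux (fun w => if w = y then none else ρ w) b)
  | ρ, .app a b => .app (renameAux ρ a) (renameAux ρ b)

mutual
/-- All (free or bound) proof variables occurring in a dynamic term. -/
def DTerm.pav : DTerm → Finset ℕ
  | .var _ => ∅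
  | .bool _ => ∅
  | .int _ => ∅
  | .ptrv _ => ∅
  | .cc _ ts => DTerm.pavList ts
  | .cf _ ts => DTerm.pavList ts
  | .ite a b d => a.pav ∪ b.pav ∪ d.pav
  | .read p t => p.allv ∪ t.pav
  | .write p a b => p.allv ∪ a.pav ∪ b.pav
  | .vpair p t => p.allv ∪ t.pav
  | .vlet px _ a b => insert px (a.pav ∪ b.pav)
  | .plam px t => insert px t.pav
  | .papp t p => t.pav ∪ p.allv
  | .unit => ∅
  | .pair a b => a.pav ∪ b.pav
  | .lett _ _ a b => a.pav ∪ b.pav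
  | .lam _ t => t.pav
  | .app a b => a.pav ∪ b.pav
  | .fix _ t => t.pav

/-- All proof variables occurring in a list of dynamic terms. -/
def DTerm.pavList : List DTerm → Finset ℕ
  | [] => ∅
  | t :: ts => t.pav ∪ DTerm.pavList ts
end

mutual
/-- All (free or bound) dynamic variables occurring in a dynamic term. -/
def DTerm.dav : DTerm → Finset ℕ
  | .var y => {y}
  | .bool _ => ∅
  | .int _ => ∅
  | .ptrv _ => ∅
  | .cc _ ts => DTerm.davList ts
  | .cf _ ts => DTerm.davList ts
  | .ite a b d => a.dav ∪ b.dav ∪ d.dav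
  | .read _ t => t.dav
  | .write _ a b => a.dav ∪ b.dav
  | .vpair _ t => t.dav
  | .vlet _ y a b => insert y (a.dav ∪ b.dav)
  | .plam _ t => t.dav
  | .papp t _ => t.dav
  | .unit => ∅
  | .pair a b => a.dav ∪ b.dav
  | .lett y1 y2 a b => insert y1 (insert y2 (a.dav ∪ b.dav))
  | .lam y t => insert y t.dav
  | .app a b => a.dav ∪ b.dav
  | .fix f t => insert f t.dav

/-- All dynamic variables occurring in a list of dynamic terms. -/
def DTerm.davList : List DTerm → Finset ℕ
  | [] => ∅
  | t :: ts => t.dav ∪ DTerm.davList ts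
end


mutual
/-- Auxiliary capture-avoiding substitution of the proof term `s` for the free proof
variable `x` in a dynamic term; `ρ` renames the proof variables bound by the proof
binders already passed, `c` is a fresh-name counter. -/
def DTerm.psubstAux (s : PTerm) (x : ℕ) : (ℕ → Option ℕ) → ℕ → DTerm → DTerm
  | _, _, .var y => .var y
  | _, _, .bool b => .bool b
  | _, _, .int i => .int i
  | _, _, .ptrv l => .ptrv l
  | ρ, c, .cc cn ts => .cc cn (DTerm.psubstAuxList s x ρ c ts)
  | ρ, c, .cf cn ts => .cf cn (DTerm.psubstAuxList s x ρ c ts)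
  | ρ, c, .ite a b d =>
      .ite (psubstAux s x ρ c a) (psubstAux s x ρ c b) (psubstAux s x ρ c d)
  | ρ, c, .read p t => .read (PTerm.substAux s x ρ c p) (psubstAux s x ρ c t)
  | ρ, c, .write p a b =>
      .write (PTerm.substAux s x ρ c p) (psubstAux s x ρ c a) (psubstAux s x ρ c b)
  | ρ, c, .vpair p t => .vpair (PTerm.substAux s x ρ c p) (psubstAux s x ρ c t)
  | ρ, c, .vlet px y a b =>
      .vlet c y (psubstAux s x ρ c a)
        (psubstAux s x (fun w => if w = px then some c else ρ w) (c + 1) b)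
  | ρ, c, .plam px t =>
      .plam c (psubstAux s x (fun w => if w = px then some c else ρ w) (c + 1) t)
  | ρ, c, .papp t p => .papp (psubstAux s x ρ c t) (PTerm.substAux s x ρ c p)
  | _, _, .unit => .unit
  | ρ, c, .pair a b => .pair (psubstAux s x ρ c a) (psubstAux s x ρ c b)
  | ρ, c, .lett y1 y2 a b => .lett y1 y2 (psubstAux s x ρ c a) (psubstAux s x ρ c b)
  | ρ, c, .lam y t => .lam y (psubstAux s x ρ c t)
  | ρ, c, .app a b => .app (psubstAux s x ρ c a) (psubstAux s x ρ c b)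
  | ρ, c, .fix f t => .fix f (psubstAux s x ρ c t)

def DTerm.psubstAuxList (s : PTerm) (x : ℕ) : (ℕ → Option ℕ) → ℕ → List DTerm → List DTerm
  | _, _, [] => []
  | ρ, c, t :: ts => DTerm.psubstAux s x ρ c t :: DTerm.psubstAuxList s x ρ c ts
end

/-- The capture-avoiding substitution `[t̲/x̲]t` of a proof term for a proof variable in a
dynamic term. -/
def psubstD (s : PTerm) (x : ℕ) (t : DTerm) : DTerm :=
  DTerm.psubstAux s x (fun _ => none) (fresh (s.allv ∪ t.pav ∪ {x})) t

mutual
/-- Auxiliary capture-avoiding substitution of the dynamic term `s` for the free dynamic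
variable `x` in a dynamic term; `ρd` (resp. `ρp`) renames the dynamic (resp. proof)
variables bound by the binders already passed, `c` is a fresh-name counter. -/
def DTerm.dsubstAux (s : DTerm) (x : ℕ) : (ℕ → Option ℕ) → (ℕ → Option ℕ) → ℕ → DTerm → DTerm
  | ρd, _, _, .var y =>
      match ρd y with
      | some z => .var z
      | none => if y = x then s else .var y
  | _, _, _, .bool b => .bool b
  | _, _, _, .int i => .int i
  | _, _, _, .ptrv l => .ptrv l
  | ρd, ρp, c, .cc cn ts => .cc cn (DTerm.dsubstAuxList s x ρd ρp c ts)
  | ρd, ρp, c, .cf cn ts => .cf cn (DTerm.dsubstAuxList s x ρd ρp c ts)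
  | ρd, ρp, c, .ite a b d =>
      .ite (dsubstAux s x ρd ρp c a) (dsubstAux s x ρd ρp c b) (dsubstAux s x ρd ρp c d)
  | ρd, ρp, c, .read p t => .read (PTerm.renameAux ρp p) (dsubstAux s x ρd ρp c t)
  | ρd, ρp, c, .write p a b =>
      .write (PTerm.renameAux ρp p) (dsubstAux s x ρd ρp c a) (dsubstAux s x ρd ρp c b)
  | ρd, ρp, c, .vpair p t => .vpair (PTerm.renameAux ρp p) (dsubstAux s x ρd ρp c t)
  | ρd, ρp, c, .vlet px y a b =>
      .vlet c (c + 1) (dsubstAux s x ρd ρp c a)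
        (dsubstAux s x (fun w => if w = y then some (c + 1) else ρd w)
          (fun w => if w = px then some c else ρp w) (c + 2) b)
  | ρd, ρp, c, .plam px t =>
      .plam c (dsubstAux s x ρd (fun w => if w = px then some c else ρp w) (c + 1) t)
  | ρd, ρp, c, .papp t p => .papp (dsubstAux s x ρd ρp c t) (PTerm.renameAux ρp p)
  | _, _, _, .unit => .unit
  | ρd, ρp, c, .pair a b => .pair (dsubstAux s x ρd ρp c a) (dsubstAux s x ρd ρp c b)
  | ρd, ρp, c, .lett y1 y2 a b =>
      .lett c (c + 1) (dsubstAux s x ρd ρp c a)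
        (dsubstAux s x (fun w => if w = y2 then some (c + 1) else
          if w = y1 then some c else ρd w) ρp (c + 2) b)
  | ρd, ρp, c, .lam y t =>
      .lam c (dsubstAux s x (fun w => if w = y then some c else ρd w) ρp (c + 1) t)
  | ρd, ρp, c, .app a b => .app (dsubstAux s x ρd ρp c a) (dsubstAux s x ρd ρp c b)
  | ρd, ρp, c, .fix f t =>
      .fix c (dsubstAux s x (fun w => if w = f then some c else ρd w) ρp (c + 1) t)

def DTerm.dsubstAuxList (s : DTerm) (x : ℕ) :
    (ℕ → Option ℕ) → (ℕ → Option ℕ) → ℕ → List DTerm → List DTerm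
  | _, _, _, [] => []
  | ρd, ρp, c, t :: ts =>
      DTerm.dsubstAux s x ρd ρp c t :: DTerm.dsubstAuxList s x ρd ρp c ts
end

/-- The capture-avoiding substitution `[t₁/x]t₂` of a dynamic term for a dynamic variable
in a dynamic term. -/
def dsubst (s : DTerm) (x : ℕ) (t : DTerm) : DTerm :=
  DTerm.dsubstAux s x (fun _ => none) (fun _ => none)
    (fresh (s.pav ∪ s.dav ∪ t.pav ∪ t.dav ∪ {x})) t


/-! ## Evaluation -/

/-- Evaluation contexts
`E ::= [] ∣ c(v₁,…,vᵢ₋₁,E,tᵢ₊₁,…,tₙ) ∣ if(E,t₂,t₃) ∣ read(t̲,E) ∣ write(t̲,E,t) ∣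
write(t̲,v,E) ∣ t̲∧E ∣ let x̲∧x = E in t ∣ E(t̲) ∣ ⟨E,t⟩ ∣ ⟨v,E⟩ ∣ let ⟨x₁,x₂⟩ = E in t ∣
app(E,t) ∣ app(v,E)` (the value restrictions are imposed by `WfE`). -/
inductive ECtx : Type
  | hole : ECtx
  | cc : ℕ → List DTerm → ECtx → List DTerm → ECtx
  | cf : ℕ → List DTerm → ECtx → List DTerm → ECtx
  | ite : ECtx → DTerm → DTerm → ECtx
  | read : PTerm → ECtx → ECtx
  | write1 : PTerm → ECtx → DTerm → ECtx
  | write2 : PTerm → DTerm → ECtx → ECtx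
  | vpair : PTerm → ECtx → ECtx
  | vlet : ℕ → ℕ → ECtx → DTerm → ECtx
  | papp : ECtx → PTerm → ECtx
  | pair1 : ECtx → DTerm → ECtx
  | pair2 : DTerm → ECtx → ECtx
  | lett : ℕ → ℕ → ECtx → DTerm → ECtx
  | app1 : ECtx → DTerm → ECtx
  | app2 : DTerm → ECtx → ECtx

/-- `E[t]`: replacing the hole of `E` by the dynamic term `t`. -/
def ECtx.fill : ECtx → DTerm → DTerm
  | .hole, t => t
  | .cc c vs E ts, t => .cc c (vs ++ E.fill t :: ts)
  | .cf c vs E ts, t => .cf c (vs ++ E.fill t :: ts)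
  | .ite E t2 t3, t => .ite (E.fill t) t2 t3
  | .read p E, t => .read p (E.fill t)
  | .write1 p E t2, t => .write p (E.fill t) t2
  | .write2 p v E, t => .write p v (E.fill t)
  | .vpair p E, t => .vpair p (E.fill t)
  | .vlet px x E t2, t => .vlet px x (E.fill t) t2
  | .papp E p, t => .papp (E.fill t) p
  | .pair1 E t2, t => .pair (E.fill t) t2
  | .pair2 v E, t => .pair v (E.fill t)
  | .lett x1 x2 E t2, t => .lett x1 x2 (E.fill t) t2
  | .app1 E t2, t => .app (E.fill t) t2
  | .app2 v E, t => .app v (E.fill t)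

/-- Well-formedness of an evaluation context: the terms to the left of the hole in a
constant application, the second argument of a `write`, and the first components of
pairs and applications with the hole on the right, must be values. -/
inductive WfE : ECtx → Prop
  | hole : WfE .hole
  | cc {c vs E ts} : (∀ v ∈ vs, IsVal v) → WfE E → WfE (.cc c vs E ts)
  | cf {c vs E ts} : (∀ v ∈ vs, IsVal v) → WfE E → WfE (.cf c vs E ts)
  | ite {E t2 t3} : WfE E → WfE (.ite E t2 t3)
  | read {p E} : WfE E → WfE (.read p E)
  | write1 {p E t2} : WfE E → WfE (.write1 p E t2)
  | write2 {p v E} : IsVal v → WfE E → WfE (.write2 p v E)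
  | vpair {p E} : WfE E → WfE (.vpair p E)
  | vlet {px x E t2} : WfE E → WfE (.vlet px x E t2)
  | papp {E p} : WfE E → WfE (.papp E p)
  | pair1 {E t2} : WfE E → WfE (.pair1 E t2)
  | pair2 {v E} : IsVal v → WfE E → WfE (.pair2 v E)
  | lett {x1 x2 E t2} : WfE E → WfE (.lett x1 x2 E t2)
  | app1 {E t2} : WfE E → WfE (.app1 E t2)
  | app2 {v E} : IsVal v → WfE E → WfE (.app2 v E)

/-- Redexes and their reductions (together with the if- and δ-reductions for the
built-in booleans and the functions `cf`). -/
inductive Redex (sig : Sig) : DTerm → DTerm → Prop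
  | vlet {px x p v t} : IsVal v →
      Redex sig (.vlet px x (.vpair p v) t) (dsubst v x (psubstD p px t))
  | papp {px v p} : IsVal v → Redex sig (.papp (.plam px v) p) (psubstD p px v)
  | lett {x1 x2 v1 v2 t} : IsVal v1 → IsVal v2 →
      Redex sig (.lett x1 x2 (.pair v1 v2) t) (dsubst v2 x2 (dsubst v1 x1 t))
  | app {x t v} : IsVal v → Redex sig (.app (.lam x t) v) (dsubst v x t)
  | fix {f t} : Redex sig (.fix f t) (dsubst (.fix f t) f t)
  | iteT {t2 t3} : Redex sig (.ite (.bool true) t2 t3) t2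
  | iteF {t2 t3} : Redex sig (.ite (.bool false) t2 t3) t3
  | cf {c vs t'} : (∀ v ∈ vs, IsVal v) → sig.cfDef c vs = some t' →
      Redex sig (.cf c vs) t'

/-- The small-step evaluation relation `(ST₁, t₁) →_{ev/st} (ST₂, t₂)`. -/
inductive Step (sig : Sig) : State → DTerm → State → DTerm → Prop
  | redex {ST E t t'} : WfE E → Redex sig t t' →
      Step sig ST (E.fill t) ST (E.fill t')
  | read {ST E p l v} : WfE E → ST l = some v →
      Step sig ST (E.fill (.read p (.ptrv l))) ST (E.fill (.vpair p v))
  | write {ST E p l v} : WfE E → (ST l).isSome → IsVal v →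
      Step sig ST (E.fill (.write p (.ptrv l) v)) (ST.update l v)
        (E.fill (.vpair p .unit))

/-- A configuration: a state together with a dynamic term. -/
abbrev Conf := State × DTerm

/-- The reflexive transitive closure of the small-step evaluation relation. -/
def Steps (sig : Sig) : Conf → Conf → Prop :=
  Relation.ReflTransGen (fun c1 c2 => Step sig c1.1 c1.2 c2.1 c2.2)


/-- The union `ST₀ ⊗ ST₁ ⊗ … ⊗ STₙ` of a list of states. -/
def unionList : List State → State
  | [] => State.empty
  | ST :: STs => TUnion ST (unionList STs)

/-! Read views as separation-logic assertions on states: `⊗` is the separating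
conjunction, `𝟏` the empty state, `⊸` the magic wand, and a context `Π` the separating
conjunction of its views; a state satisfying `⊨ ST₀ : μ` is likewise an assertion.
Each rule of Figure 3 is then a valid entailment: the rules that split `Π` and `μ` split
the state accordingly, `⊸`-introduction is the adjunction between `⊗` and `⊸`, and
`⊸`-elimination is its counit. Induction on the derivation gives the lemma. -/

@[simp] lemma tUnion_apply (a b : State) (l : Addr) : TUnion a b l = (a l).or (b l) := by
  simp [TUnion]

@[simp] lemma sUnion_apply (μ1 μ2 : StateType) (l : Addr) :
    SUnion μ1 μ2 l = (μ1 l).or (μ2 l) := by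
  simp [SUnion]

lemma TDisj.symm {a b : State} (h : TDisj a b) : TDisj b a := fun l => (h l).symm

lemma tDisj_empty (a : State) : TDisj a State.empty := fun _ => Or.inr rfl

lemma tDisj_tUnion_left {a b c : State} : TDisj (TUnion a b) c ↔ TDisj a c ∧ TDisj b c := by
  simp only [TDisj, tUnion_apply, Option.or_eq_none_iff, ← forall_and]
  exact forall_congr' fun _ => by tauto

lemma tDisj_tUnion_right {a b c : State} : TDisj a (TUnion b c) ↔ TDisj a b ∧ TDisj a c := by
  simp only [TDisj, tUnion_apply, Option.or_eq_none_iff, ← forall_and]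
  exact forall_congr' fun _ => by tauto

lemma tUnion_comm {a b : State} (h : TDisj a b) : TUnion a b = TUnion b a := by
  funext l
  rcases h l with h | h <;> simp [h, Option.or_none]

lemma tUnion_assoc (a b c : State) : TUnion (TUnion a b) c = TUnion a (TUnion b c) := by
  funext l
  simp [Option.or_assoc]

lemma tUnion_empty (a : State) : TUnion a State.empty = a := by
  funext l
  simp [State.empty, Option.or_none]

abbrev SPred := State → Prop

def sepConj (A B : SPred) : SPred := fun ST =>
  ∃ S1 S2, TDisj S1 S2 ∧ ST = TUnion S1 S2 ∧ A S1 ∧ B S2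

namespace SPred

lemma sepConj_comm (A B : SPred) : sepConj A B = sepConj B A := by
  funext ST
  apply propext
  constructor <;> rintro ⟨S1, S2, hd, rfl, h1, h2⟩ <;>
    exact ⟨S2, S1, hd.symm, tUnion_comm hd, h2, h1⟩

lemma sepConj_assoc (A B C : SPred) :
    sepConj (sepConj A B) C = sepConj A (sepConj B C) := by
  funext ST
  apply propext
  constructor
  · rintro ⟨S12, S3, hd, rfl, ⟨S1, S2, hd12, rfl, h1, h2⟩, h3⟩
    obtain ⟨hd13, hd23⟩ := tDisj_tUnion_left.mp hd
    exact ⟨S1, TUnion S2 S3, tDisj_tUnion_right.mpr ⟨hd12, hd13⟩, tUnion_assoc _ _ _,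
      h1, S2, S3, hd23, rfl, h2, h3⟩
  · rintro ⟨S1, S23, hd, rfl, h1, ⟨S2, S3, hd23, rfl, h2, h3⟩⟩
    obtain ⟨hd12, hd13⟩ := tDisj_tUnion_right.mp hd
    exact ⟨TUnion S1 S2, S3, tDisj_tUnion_left.mpr ⟨hd13, hd23⟩, (tUnion_assoc _ _ _).symm,
      ⟨S1, S2, hd12, rfl, h1, h2⟩, h3⟩

lemma sepConj_emp (A : SPred) : sepConj A (· = State.empty) = A := by
  funext ST
  apply propext
  constructor
  · rintro ⟨S, _, _, rfl, hA, rfl⟩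
    rwa [tUnion_empty]
  · exact fun hA => ⟨ST, State.empty, tDisj_empty ST, (tUnion_empty ST).symm, hA, rfl⟩

instance : CommMonoid SPred where
  mul := sepConj
  one := (· = State.empty)
  mul_assoc := sepConj_assoc
  mul_one := sepConj_emp
  one_mul A := (sepConj_comm _ A).trans (sepConj_emp A)
  mul_comm := sepConj_comm

lemma mul_mono {A A' B B' : SPred} (hA : A ≤ A') (hB : B ≤ B') : A * B ≤ A' * B' :=
  fun _ ⟨S1, S2, hd, hST, h1, h2⟩ => ⟨S1, S2, hd, hST, hA S1 h1, hB S2 h2⟩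

end SPred

open SPred

section Entailment

variable {sig : Sig}

lemma sat_tensor (V1 V2 : View) : Sat sig (.tensor V1 V2) = Sat sig V1 * Sat sig V2 := by
  funext ST
  rw [Sat]
  rfl

lemma sat_one : Sat sig .one = 1 := by
  funext ST
  rw [Sat]
  rfl

lemma le_sat_limp_iff {V1 V2 : View} {A : SPred} :
    A ≤ Sat sig (.limp V1 V2) ↔ Sat sig V1 * A ≤ Sat sig V2 := by
  constructor
  · rintro h _ ⟨S0, S, hd, rfl, h0, hA⟩
    exact h S hA S0 h0 hd
  · intro h S hA S0 h0 hd
    exact h _ ⟨S0, S, hd, rfl, h0, hA⟩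

lemma sat_limp_mul_sat_le (V1 V2 : View) :
    Sat sig (.limp V1 V2) * Sat sig V1 ≤ Sat sig V2 := by
  rw [mul_comm, ← le_sat_limp_iff]

variable (sig) in
def ctxPred (P : PCtx) : SPred :=
  (P.map fun xV => Sat sig xV.2).prod

@[simp] lemma ctxPred_zero : ctxPred sig 0 = 1 := Multiset.prod_zero

@[simp] lemma ctxPred_add (P1 P2 : PCtx) :
    ctxPred sig (P1 + P2) = ctxPred sig P1 * ctxPred sig P2 := by
  simp [ctxPred]

@[simp] lemma ctxPred_cons (xV : ℕ × View) (P : PCtx) :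
    ctxPred sig (xV ::ₘ P) = Sat sig xV.2 * ctxPred sig P := by
  simp [ctxPred]

@[simp] lemma ctxPred_singleton (x : ℕ) (V : View) : ctxPred sig {(x, V)} = Sat sig V := by
  simp [ctxPred]

variable (sig) in
def stOkPred (μ : StateType) : SPred := fun ST => StOk sig ST μ

lemma stOkPred_empty : stOkPred sig StateType.empty = 1 := by
  funext ST
  apply propext
  constructor
  · rintro ⟨hdom, -⟩
    funext l
    simpa [StateType.empty, State.empty] using hdom l
  · rintro rfl
    exact ⟨fun _ => Iff.rfl, fun _ _ _ h => nomatch h⟩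

lemma stOkPred_single_le (l : Addr) (T : Viewtype) :
    stOkPred sig (StateType.single l T) ≤ Sat sig (.at_ T l) := by
  rintro ST ⟨hdom, hty⟩
  obtain ⟨v, hv⟩ := Option.isSome_iff_exists.mp ((hdom l).mpr (by simp [StateType.single]))
  refine ⟨v, funext fun l' => ?_, (hty l v T hv (by simp [StateType.single])).2⟩
  by_cases h : l' = l
  · simp [State.single, h, hv]
  · simpa [State.single, StateType.single, h] using hdom l'

lemma stOkPred_sUnion_le {μ1 μ2 : StateType} (hd : SDisj μ1 μ2) :
    stOkPred sig (SUnion μ1 μ2) ≤ stOkPred sig μ1 * stOkPred sig μ2 := by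
  rintro ST ⟨hdom, hty⟩
  -- cut `ST` along `dom μ₁`; disjointness of `μ₁` and `μ₂` makes the rest realize `μ₂`
  refine ⟨fun l => if (μ1 l).isSome then ST l else none,
    fun l => if (μ1 l).isSome then none else ST l, ?_, ?_, ⟨?_, ?_⟩, ⟨?_, ?_⟩⟩
  · intro l
    by_cases h1 : (μ1 l).isSome <;> simp [h1]
  · funext l
    by_cases h1 : (μ1 l).isSome <;> simp [h1]
  · intro l
    by_cases h1 : (μ1 l).isSome <;> simp [h1]
    simpa [h1] using hdom l
  · intro l v T hv hT
    simp only [hT, Option.isSome_some, if_true] at hv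
    exact hty l v T hv (by simp [hT])
  · intro l
    have hl := hdom l
    cases h1 : μ1 l
    · simpa [h1] using hl
    · simp [h1, (hd l).resolve_left (by simp [h1])]
  · intro l v T hv hT
    have h1 : μ1 l = none := (hd l).resolve_right (by simp [hT])
    simp only [h1, Option.isSome_none] at hv
    exact hty l v T (by simpa using hv) (by simp [h1, hT])

lemma stOkPred_sUnion_mul_ctxPred_add_le {μ1 μ2 : StateType} (hd : SDisj μ1 μ2)
    (P1 P2 : PCtx) :
    stOkPred sig (SUnion μ1 μ2) * ctxPred sig (P1 + P2) ≤
      stOkPred sig μ1 * ctxPred sig P1 * (stOkPred sig μ2 * ctxPred sig P2) := by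
  rw [ctxPred_add, mul_mul_mul_comm]
  exact mul_mono (stOkPred_sUnion_le hd) le_rfl

theorem PJ.entails {P : PCtx} {μ : StateType} {p : PTerm} {V : View} (hj : PJ P μ p V) :
    stOkPred sig μ * ctxPred sig P ≤ Sat sig V := by
  induction hj with
  | @addr T l _ =>
    rw [ctxPred_zero, mul_one]
    exact stOkPred_single_le l T
  | var => rw [stOkPred_empty, one_mul, ctxPred_singleton]
  | unit => rw [stOkPred_empty, one_mul, ctxPred_zero, sat_one]
  | @pair P1 P2 μ1 μ2 _ _ V1 V2 _ _ hd ih1 ih2 =>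
    calc _ ≤ stOkPred sig μ1 * ctxPred sig P1 * (stOkPred sig μ2 * ctxPred sig P2) :=
          stOkPred_sUnion_mul_ctxPred_add_le hd P1 P2
      _ ≤ Sat sig V1 * Sat sig V2 := mul_mono ih1 ih2
      _ = Sat sig (.tensor V1 V2) := (sat_tensor V1 V2).symm
  | @lett P1 P2 μ1 μ2 _ _ x1 x2 V1 V2 _ _ _ hd ih1 ih2 =>
    calc _ ≤ stOkPred sig μ1 * ctxPred sig P1 * (stOkPred sig μ2 * ctxPred sig P2) :=
          stOkPred_sUnion_mul_ctxPred_add_le hd P1 P2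
      _ ≤ Sat sig V1 * Sat sig V2 * (stOkPred sig μ2 * ctxPred sig P2) := by
          rw [← sat_tensor]
          exact mul_mono ih1 le_rfl
      _ = stOkPred sig μ2 * ctxPred sig (P2 + {(x1, V1), (x2, V2)}) := by
          rw [ctxPred_add, Multiset.insert_eq_cons, ctxPred_cons, ctxPred_singleton, mul_comm,
            mul_assoc]
      _ ≤ _ := ih2
  | lam _ ih =>
    refine le_sat_limp_iff.mpr (le_of_eq_of_le ?_ ih)
    rw [ctxPred_add, ctxPred_singleton, mul_comm, mul_assoc]
  | @app P1 P2 μ1 μ2 _ _ V1 V2 _ _ hd ih1 ih2 =>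
    calc _ ≤ stOkPred sig μ1 * ctxPred sig P1 * (stOkPred sig μ2 * ctxPred sig P2) :=
          stOkPred_sUnion_mul_ctxPred_add_le hd P1 P2
      _ ≤ Sat sig (.limp V1 V2) * Sat sig V1 := mul_mono ih1 ih2
      _ ≤ Sat sig V2 := sat_limp_mul_sat_le V1 V2

lemma tDisj_unionList {S : State} {STs : List State} (h : ∀ S' ∈ STs, TDisj S S') :
    TDisj S (unionList STs) := by
  induction STs with
  | nil => exact tDisj_empty S
  | cons S' STs ih =>
    rw [List.forall_mem_cons] at h
    exact tDisj_tUnion_right.mpr ⟨h.1, ih h.2⟩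

lemma ctxPred_unionList {Γ : List (ℕ × View)} {STs : List State}
    (hSat : List.Forall₂ (fun xV ST => Sat sig xV.2 ST) Γ STs) (hdisj : STs.Pairwise TDisj) :
    ctxPred sig Γ (unionList STs) := by
  induction hSat with
  | nil => rfl
  | @cons xV ST Γ STs hxV _ ih =>
    obtain ⟨hd, hdisj⟩ := List.pairwise_cons.mp hdisj
    rw [← Multiset.cons_coe, ctxPred_cons]
    exact ⟨ST, unionList STs, tDisj_unionList hd, rfl, hxV, ih hdisj⟩

end Entailment

/-- **Lemma 1 (viewing)**: assume `Π ⊢_μ t̲ : V` is derivable for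
`Π = x̲₁:V₁, …, x̲ₙ:Vₙ`. If `ST = ST₀ ⊗ ST₁ ⊗ … ⊗ STₙ` (the states being pairwise
disjoint) where `⊨ ST₀ : μ` and `STᵢ ⊨ Vᵢ` for `1 ≤ i ≤ n`, then `ST ⊨ V` holds. -/
theorem viewing_lemma (sig : Sig) (Γ : List (ℕ × View)) (μ : StateType)
    (p : PTerm) (V : View) (hj : PJ (↑Γ : PCtx) μ p V)
    (ST0 : State) (STs : List State) (hST0 : StOk sig ST0 μ)
    (hSat : List.Forall₂ (fun (xV : ℕ × View) ST => Sat sig xV.2 ST) Γ STs)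
    (hdisj : (ST0 :: STs).Pairwise TDisj) :
    Sat sig V (unionList (ST0 :: STs)) := by
  obtain ⟨hd0, hdisj⟩ := List.pairwise_cons.mp hdisj
  exact hj.entails _
    ⟨ST0, unionList STs, tDisj_unionList hd0, rfl, hST0, ctxPred_unionList hSat hdisj⟩

end LView
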